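/- arXiv:1804.09080 — 3 statements merged into one kernel-verified Lean document; each statement's English description precedes it below -/
import Mathlib

section
/- Let f : M → N be a homomorphism of right R-modules which is C-injective for every module C in a class 𝒞 (i.e., Hom_R(f, C) is surjective for every C ∈ 𝒞). Let D be a module which embeds into a product of modules from 𝒞 and satisfies Ext¹_R(coker f, D) = 0. Then f is D-injective, i.e., Hom_R(f, D) is surjective. -/
open LinearMap

/-- `Ext¹_R(A,B) = 0`: every short exact sequence `0 → B → E → A → 0` of `R`-modules
splits. -/
def Ext1Zero (R : Type) [Ring R] (A B : Type) [AddCommGroup A] [Module R A]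
    [AddCommGroup B] [Module R B] : Prop :=
  ∀ (E : Type) [AddCommGroup E] [Module R E] (i : B →ₗ[R] E) (p : E →ₗ[R] A),
    Function.Injective i → Function.Surjective p → LinearMap.range i = LinearMap.ker p →
    ∃ s : A →ₗ[R] E, p ∘ₗ s = LinearMap.id

/-!
Since `D` embeds into a product of modules of `𝒞` and every component of `e ∘ g` extends along
`f`, the map `g` vanishes on `ker f` and so induces `range f → D`. The pushout of
`range f ↪ N` along this map is an extension of `N ⧸ range f` by `D`; it splits because
`Ext¹(N ⧸ range f, D) = 0`, and a retraction onto `D` restricted to `N` extends `g`.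
-/

namespace Submodule

variable {R : Type} [Ring R] {N D : Type} [AddCommGroup N] [Module R N]
  [AddCommGroup D] [Module R D] (K : Submodule R N) (g : K →ₗ[R] D)

def pushoutRel : Submodule R (N × D) := range (K.subtype.prod (-g))

abbrev Pushout := (N × D) ⧸ K.pushoutRel g

namespace Pushout

def inr : D →ₗ[R] K.Pushout g := (K.pushoutRel g).mkQ ∘ₗ LinearMap.inr R N D

def inl : N →ₗ[R] K.Pushout g := (K.pushoutRel g).mkQ ∘ₗ LinearMap.inl R N D

def toQuotient : K.Pushout g →ₗ[R] N ⧸ K :=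
  (K.pushoutRel g).liftQ (K.mkQ ∘ₗ LinearMap.fst R N D) <| by
    rintro _ ⟨k, rfl⟩
    simp

theorem inl_subtype (k : K) : inl K g k = inr K g (g k) := by
  rw [inl, inr, comp_apply, comp_apply, ← sub_eq_zero, ← map_sub, mkQ_apply,
    Quotient.mk_eq_zero]
  exact ⟨k, by simp⟩

theorem inr_injective : Function.Injective (inr K g) := by
  rw [← ker_eq_bot, eq_bot_iff]
  intro d hd
  obtain ⟨k, hk⟩ := (Quotient.mk_eq_zero _).mp hd
  obtain ⟨hk0, hkd⟩ := Prod.ext_iff.mp hk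
  obtain rfl : k = 0 := Subtype.ext hk0
  simpa using hkd.symm

theorem toQuotient_surjective : Function.Surjective (toQuotient K g) := by
  intro x
  obtain ⟨n, rfl⟩ := K.mkQ_surjective x
  exact ⟨inl K g n, rfl⟩

theorem exact : Function.Exact (inr K g) (toQuotient K g) := by
  refine exact_of_comp_of_mem_range (by ext; simp [inr, toQuotient]) fun q hq ↦ ?_
  obtain ⟨⟨n, d⟩, rfl⟩ := mkQ_surjective _ q
  have hn : n ∈ K := (Quotient.mk_eq_zero K).mp hq
  refine ⟨d + g ⟨n, hn⟩, ?_⟩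
  rw [map_add, ← inl_subtype, add_comm]
  simp only [inl, inr, comp_apply, ← map_add, inl_apply, inr_apply, Prod.mk_add_mk, add_zero,
    zero_add]

end Pushout

end Submodule

namespace Ext1Zero

variable {R : Type} [Ring R]

theorem exists_retraction {A B E : Type} [AddCommGroup A] [Module R A] [AddCommGroup B]
    [Module R B] [AddCommGroup E] [Module R E] (hExt : Ext1Zero R A B) {i : B →ₗ[R] E}
    {p : E →ₗ[R] A} (hexact : Function.Exact i p) (hi : Function.Injective i)
    (hp : Function.Surjective p) : ∃ r : E →ₗ[R] B, r ∘ₗ i = LinearMap.id :=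
  ((hexact.split_tfae hi hp).out 0 1).mp (hExt E i p hi hp (exact_iff.mp hexact).symm)

variable {M N D : Type} [AddCommGroup M] [Module R M] [AddCommGroup N] [Module R N]
  [AddCommGroup D] [Module R D]

open Submodule in
theorem exists_comp_subtype_eq {K : Submodule R N} (hExt : Ext1Zero R (N ⧸ K) D)
    (g : K →ₗ[R] D) : ∃ h : N →ₗ[R] D, h ∘ₗ K.subtype = g := by
  obtain ⟨r, hr⟩ := exists_retraction hExt (Pushout.exact K g) (Pushout.inr_injective K g)
    (Pushout.toQuotient_surjective K g)
  refine ⟨r ∘ₗ Pushout.inl K g, LinearMap.ext fun k ↦ ?_⟩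
  simpa [Pushout.inl_subtype] using LinearMap.congr_fun hr (g k)

theorem exists_comp_eq_of_ker_le {f : M →ₗ[R] N} {g : M →ₗ[R] D}
    (hExt : Ext1Zero R (N ⧸ range f) D) (hker : ker f ≤ ker g) :
    ∃ h : N →ₗ[R] D, h ∘ₗ f = g := by
  obtain ⟨h, hh⟩ := exists_comp_subtype_eq hExt
    ((ker f).liftQ g hker ∘ₗ f.quotKerEquivRange.symm.toLinearMap)
  refine ⟨h, LinearMap.ext fun m ↦ ?_⟩
  have := LinearMap.congr_fun hh ⟨f m, f.mem_range_self m⟩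
  rw [comp_apply, comp_apply, LinearEquiv.coe_coe, quotKerEquivRange_symm_apply_image] at this
  simpa using this

end Ext1Zero

theorem ker_le_ker_of_comp_eq_comp {R M N D P : Type*} [Semiring R] [AddCommMonoid M]
    [Module R M] [AddCommMonoid N] [Module R N] [AddCommMonoid D] [Module R D] [AddCommMonoid P]
    [Module R P] {f : M →ₗ[R] N} {g : M →ₗ[R] D} {h : N →ₗ[R] P} {e : D →ₗ[R] P}
    (he : Function.Injective e) (hcomm : h ∘ₗ f = e ∘ₗ g) : ker f ≤ ker g := by
  intro x hx
  apply he
  rw [map_zero, ← comp_apply, ← hcomm, comp_apply, mem_ker.mp hx, map_zero]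

/-- If `f : M → N` is `𝒞`-injective (i.e. `Hom(f, C)` is surjective for
every `C ∈ 𝒞`), `D` embeds into a product of modules from `𝒞`, and
`Ext¹(coker f, D) = 0`, then `f` is `D`-injective, i.e. `Hom(f, D)` is surjective. -/
theorem cInjective_of_cogen_of_ext1Zero_coker
    {R : Type} [Ring R] (𝒞 : Set (ModuleCat.{0} R))
    {M N : Type} [AddCommGroup M] [Module R M] [AddCommGroup N] [Module R N]
    (f : M →ₗ[R] N)
    (hf : ∀ C ∈ 𝒞, ∀ g : M →ₗ[R] ↥C, ∃ h : N →ₗ[R] ↥C, h ∘ₗ f = g)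
    (D : Type) [AddCommGroup D] [Module R D]
    (hD : ∃ (ι : Type) (C : ι → ModuleCat.{0} R) (_ : ∀ i, C i ∈ 𝒞)
      (e : D →ₗ[R] ((i : ι) → ↥(C i))), Function.Injective e)
    (hExt : Ext1Zero R (N ⧸ LinearMap.range f) D) :
    ∀ g : M →ₗ[R] D, ∃ h : N →ₗ[R] D, h ∘ₗ f = g := by
  intro g
  obtain ⟨ι, C, hC, e, he⟩ := hD
  choose h hh using fun i ↦ hf (C i) (hC i) (LinearMap.proj i ∘ₗ e ∘ₗ g)
  have hcomm : LinearMap.pi h ∘ₗ f = e ∘ₗ g := by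
    ext m i
    exact LinearMap.congr_fun (hh i) m
  exact Ext1Zero.exists_comp_eq_of_ker_le hExt (ker_le_ker_of_comp_eq_comp he hcomm)
end

section
/- Let 𝒞 be a class of right R-modules, σ a limit ordinal, and (M_α, f_{βα} : M_α → M_β | α < β ≤ σ) a continuous well-ordered direct system of modules (meaning M_θ = colim_{α<θ} M_α for each limit ordinal θ ≤ σ) such that M_α ∈ ⊥𝒞 and the map f_{α+1,α} is 𝒞-injective for all α < σ. Then M_σ ∈ ⊥𝒞, i.e., Ext¹_R(M_σ, C) = 0 for all C ∈ 𝒞. -/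
/-!
Given an extension `0 → C → E → M_σ → 0` with `p : E → M_σ`, build by transfinite recursion
maps `s_α : M_α → E` for `α < σ` with `p ∘ s_α = f_{σα}` that are compatible along the chain.
At `0` lift `f_{σ0}` using `Ext¹(M_0, C) = 0`. At `α + 1`, an arbitrary lift `t` of `f_{σ,α+1}`
disagrees with `s_α` on `M_α` by a map `M_α → C`; `𝒞`-injectivity of `f_{α+1,α}` extends it to
`M_{α+1}`, and subtracting the extension from `t` gives `s_{α+1}`. At limits, and finally at `σ`,
continuity glues the `s_α`; at `σ` the glued map is a splitting of `p`.
-/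

open LinearMap

theorem exists_coherent_family {ι : Type*} [Preorder ι] [WellFoundedLT ι] {N : ι → Type*}
    [∀ i, Nonempty (N i)] (P : ∀ i, N i → Prop) (Rel : ∀ i j, i < j → N i → N j → Prop)
    (extend : ∀ j (t : ∀ i, i < j → N i), (∀ i hi, P i (t i hi)) →
      (∀ i k (hik : i < k) (hkj : k < j), Rel i k hik (t i (hik.trans hkj)) (t k hkj)) →
      ∃ x, P j x ∧ ∀ i hi, Rel i j hi (t i hi) x) :
    ∃ S : ∀ i, N i, (∀ i, P i (S i)) ∧ ∀ i j (hij : i < j), Rel i j hij (S i) (S j) := by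
  classical
  let step : ∀ j, (∀ i, i < j → N i) → N j := fun j t =>
    if H : ∃ x, P j x ∧ ∀ i hi, Rel i j hi (t i hi) x then H.choose else Classical.arbitrary _
  let S := WellFoundedLT.fix step
  have key : ∀ j, P j (S j) ∧ ∀ i hi, Rel i j hi (S i) (S j) := by
    intro j
    induction j using WellFoundedLT.induction with
    | ind j IH =>
      have H := extend j (fun i _ => S i) (fun i hi => (IH i hi).1)
        (fun i k hik hkj => (IH k hkj).2 i hik)
      have hSj : S j = H.choose := (WellFoundedLT.fix_eq step j).trans (dif_pos H)
      rw [hSj]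
      exact H.choose_spec
  exact ⟨S, fun j => (key j).1, fun i j hij => (key j).2 i hij⟩

section ShortExact

variable {R A A' B E T : Type} [Ring R] [AddCommGroup A] [Module R A]
  [AddCommGroup A'] [Module R A'] [AddCommGroup B] [Module R B] [AddCommGroup E] [Module R E]
  [AddCommGroup T] [Module R T]
  {i : B →ₗ[R] E} {p : E →ₗ[R] T}

theorem exists_comp_eq_of_range_le (hi : Function.Injective i) {d : A →ₗ[R] E}
    (hd : range d ≤ range i) : ∃ g : A →ₗ[R] B, i ∘ₗ g = d :=
  ⟨(LinearEquiv.ofInjective i hi).symm ∘ₗ d.codRestrict _ fun x => hd ⟨x, rfl⟩, by ext; simp⟩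

/-- Pulling `0 → B → E → T → 0` back along `g` gives an extension of `A` by `B`; a splitting of it
is a lift of `g`. -/
theorem Ext1Zero.exists_lift (hext : Ext1Zero R A B) (hi : Function.Injective i)
    (hp : Function.Surjective p) (hr : range i = ker p) (g : A →ₗ[R] T) :
    ∃ t : A →ₗ[R] E, p ∘ₗ t = g := by
  let P := ker (g ∘ₗ fst R A E - p ∘ₗ snd R A E)
  have mem_P (x : A × E) : x ∈ P ↔ g x.1 = p x.2 := by simp [P, sub_eq_zero]
  have hpi (b : B) : p (i b) = 0 := by
    rw [← mem_ker, ← hr]; exact mem_range_self i b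
  let i' : B →ₗ[R] P := codRestrict P (inr R A E ∘ₗ i) fun b => by simp [mem_P, hpi]
  let p' : P →ₗ[R] A := fst R A E ∘ₗ P.subtype
  have hi' : Function.Injective i' := fun b b' h => hi congr(($h : A × E).2)
  have hp' : Function.Surjective p' := fun a => by
    obtain ⟨e, he⟩ := hp (g a)
    exact ⟨⟨(a, e), (mem_P _).2 he.symm⟩, rfl⟩
  have hr' : range i' = ker p' := by
    ext ⟨⟨a, e⟩, hx⟩
    simp only [mem_range, mem_ker]
    constructor
    · rintro ⟨b, hb⟩
      exact congr(($hb : A × E).1).symm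
    · rintro (rfl : a = 0)
      have he : e ∈ range i := by
        rw [hr, mem_ker, ← (mem_P _).1 hx, map_zero]
      obtain ⟨b, rfl⟩ := he
      exact ⟨b, rfl⟩
  obtain ⟨s, hs⟩ := hext P i' p' hi' hp' hr'
  refine ⟨snd R A E ∘ₗ P.subtype ∘ₗ s, LinearMap.ext fun a => ?_⟩
  have h1 : ((s a : A × E)).1 = a := congr($hs a)
  simpa [h1] using ((mem_P _).1 (s a).2).symm

theorem Ext1Zero.exists_lift_extending (hext : Ext1Zero R A' B) (hi : Function.Injective i)
    (hp : Function.Surjective p) (hr : range i = ker p) {j : A →ₗ[R] A'}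
    (hj : ∀ g : A →ₗ[R] B, ∃ h : A' →ₗ[R] B, h ∘ₗ j = g) (u : A' →ₗ[R] T) {s : A →ₗ[R] E}
    (hs : p ∘ₗ s = u ∘ₗ j) : ∃ s' : A' →ₗ[R] E, p ∘ₗ s' = u ∧ s' ∘ₗ j = s := by
  obtain ⟨t, ht⟩ := hext.exists_lift hi hp hr u
  have hpi : p ∘ₗ i = 0 := by
    ext b
    exact (hr ▸ mem_range_self i b : i b ∈ ker p)
  have hd : range (t ∘ₗ j - s) ≤ range i := by
    rintro _ ⟨x, rfl⟩
    rw [hr, mem_ker, ← comp_apply, comp_sub, ← comp_assoc, ht, hs, sub_self, LinearMap.zero_apply]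
  obtain ⟨g, hg⟩ := exists_comp_eq_of_range_le hi hd
  obtain ⟨h, hh⟩ := hj g
  refine ⟨t - i ∘ₗ h, ?_, ?_⟩
  · rw [comp_sub, ht, ← comp_assoc, hpi, zero_comp, sub_zero]
  · rw [sub_comp, comp_assoc, hh, hg, sub_sub_cancel]

end ShortExact

structure ContinuousChain (R : Type) [Ring R] (σ : Ordinal) (M : Ordinal → Type)
    [∀ α, AddCommGroup (M α)] [∀ α, Module R (M α)] where
  map : ∀ α β, α ≤ β → β ≤ σ → (M α →ₗ[R] M β)
  map_id : ∀ α (h : α ≤ σ), map α α le_rfl h = LinearMap.id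
  map_comp : ∀ (α β γ) (h1 : α ≤ β) (h2 : β ≤ γ) (h3 : γ ≤ σ),
    (map β γ h2 h3) ∘ₗ (map α β h1 (h2.trans h3)) = map α γ (h1.trans h2) h3
  isColimit : ∀ (θ : Ordinal) (hθσ : θ ≤ σ), Order.IsSuccLimit θ →
    ∀ (C : Type) [AddCommGroup C] [Module R C] (g : ∀ α, α < θ → (M α →ₗ[R] C)),
      (∀ (α β) (hαβ : α ≤ β) (hβ : β < θ),
        (g β hβ) ∘ₗ (map α β hαβ (hβ.le.trans hθσ)) = g α (lt_of_le_of_lt hαβ hβ)) →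
      ∃! h : M θ →ₗ[R] C, ∀ (α) (hα : α < θ), h ∘ₗ (map α θ hα.le hθσ) = g α hα

namespace ContinuousChain

variable {R : Type} [Ring R] {σ : Ordinal} {M : Ordinal → Type} [∀ α, AddCommGroup (M α)]
  [∀ α, Module R (M α)] (D : ContinuousChain R σ M)
  {B E T : Type} [AddCommGroup B] [Module R B] [AddCommGroup E] [Module R E]
  [AddCommGroup T] [Module R T]

def IsCompatible {θ : Ordinal} (hθσ : θ ≤ σ) (s : ∀ α, α < θ → (M α →ₗ[R] E)) : Prop :=
  ∀ α β (hαβ : α ≤ β) (hβ : β < θ),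
    s β hβ ∘ₗ D.map α β hαβ (hβ.le.trans hθσ) = s α (hαβ.trans_lt hβ)

theorem isCompatible_of_lt {θ : Ordinal} {hθσ : θ ≤ σ} {s : ∀ α, α < θ → (M α →ₗ[R] E)}
    (hs : ∀ α β (hαβ : α < β) (hβ : β < θ),
      s β hβ ∘ₗ D.map α β hαβ.le (hβ.le.trans hθσ) = s α (hαβ.trans hβ)) :
    D.IsCompatible hθσ s := by
  intro α β hαβ hβ
  rcases hαβ.eq_or_lt with rfl | hlt
  · rw [D.map_id, comp_id]
  · exact hs α β hlt hβ

theorem hom_ext_of_isSuccLimit {θ : Ordinal} (hθσ : θ ≤ σ) (hθ : Order.IsSuccLimit θ)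
    {a b : M θ →ₗ[R] T}
    (h : ∀ α (hα : α < θ), a ∘ₗ D.map α θ hα.le hθσ = b ∘ₗ D.map α θ hα.le hθσ) : a = b := by
  obtain ⟨c, -, hc⟩ := D.isColimit θ hθσ hθ T (fun α hα => b ∘ₗ D.map α θ hα.le hθσ)
    fun α β hαβ hβ => by rw [comp_assoc, D.map_comp]
  exact (hc a h).trans (hc b fun _ _ => rfl).symm

theorem exists_lift_of_isSuccLimit {θ : Ordinal} (hθσ : θ ≤ σ) (hθ : Order.IsSuccLimit θ)
    (p : E →ₗ[R] T) (u : M θ →ₗ[R] T) {s : ∀ α, α < θ → (M α →ₗ[R] E)}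
    (hs : D.IsCompatible hθσ s)
    (hlift : ∀ α (hα : α < θ), p ∘ₗ s α hα = u ∘ₗ D.map α θ hα.le hθσ) :
    ∃ x : M θ →ₗ[R] E, p ∘ₗ x = u ∧ ∀ α (hα : α < θ), x ∘ₗ D.map α θ hα.le hθσ = s α hα := by
  obtain ⟨x, hx, -⟩ := D.isColimit θ hθσ hθ E s hs
  refine ⟨x, D.hom_ext_of_isSuccLimit hθσ hθ fun α hα => ?_, hx⟩
  rw [comp_assoc, hx α hα, hlift]

theorem exists_lift_of_lt (hperp : ∀ α < σ, Ext1Zero R (M α) B)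
    (hinj : ∀ α (_ : α < σ) (h1 : α ≤ α + 1) (h2 : α + 1 ≤ σ) (g : M α →ₗ[R] B),
      ∃ h : M (α + 1) →ₗ[R] B, h ∘ₗ D.map α (α + 1) h1 h2 = g)
    {i : B →ₗ[R] E} {p : E →ₗ[R] M σ}
    (hi : Function.Injective i) (hp : Function.Surjective p) (hr : range i = ker p)
    {θ : Ordinal} (hθ : θ < σ) {s : ∀ α, α < θ → (M α →ₗ[R] E)}
    (hs : D.IsCompatible hθ.le s)
    (hlift : ∀ α (hα : α < θ), p ∘ₗ s α hα = D.map α σ (hα.le.trans hθ.le) le_rfl) :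
    ∃ x : M θ →ₗ[R] E, p ∘ₗ x = D.map θ σ hθ.le le_rfl ∧
      ∀ α (hα : α < θ), x ∘ₗ D.map α θ hα.le hθ.le = s α hα := by
  rcases Ordinal.zero_or_succ_or_isSuccLimit θ with rfl | ⟨β, hβ⟩ | hlim
  · obtain ⟨x, hx⟩ := (hperp 0 hθ).exists_lift hi hp hr (D.map 0 σ hθ.le le_rfl)
    exact ⟨x, hx, fun α hα => absurd hα (not_lt_zero (a := α))⟩
  · obtain rfl : β + 1 = θ := (Order.succ_eq_add_one β).symm.trans hβ
    have hβθ : β < β + 1 := Order.lt_add_one_iff.2 le_rfl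
    obtain ⟨x, hx, hxβ⟩ := (hperp (β + 1) hθ).exists_lift_extending hi hp hr
      (hinj β (hβθ.trans hθ) hβθ.le hθ.le) (D.map (β + 1) σ hθ.le le_rfl) (s := s β hβθ)
      (by rw [hlift, D.map_comp])
    refine ⟨x, hx, fun α hα => ?_⟩
    have hαβ : α ≤ β := Order.lt_add_one_iff.1 hα
    rw [← D.map_comp α β (β + 1) hαβ hβθ.le, ← comp_assoc, hxβ, hs α β hαβ hβθ]
  · exact D.exists_lift_of_isSuccLimit hθ.le hlim p _ hs fun α hα => by rw [hlift, D.map_comp]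

theorem exists_compatible_lifts (hperp : ∀ α < σ, Ext1Zero R (M α) B)
    (hinj : ∀ α (_ : α < σ) (h1 : α ≤ α + 1) (h2 : α + 1 ≤ σ) (g : M α →ₗ[R] B),
      ∃ h : M (α + 1) →ₗ[R] B, h ∘ₗ D.map α (α + 1) h1 h2 = g)
    {i : B →ₗ[R] E} {p : E →ₗ[R] M σ}
    (hi : Function.Injective i) (hp : Function.Surjective p) (hr : range i = ker p) :
    ∃ s : ∀ α, α < σ → (M α →ₗ[R] E),
    D.IsCompatible le_rfl s ∧ ∀ α (hα : α < σ), p ∘ₗ s α hα = D.map α σ hα.le le_rfl := by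
  obtain ⟨S, hSlift, hScoh⟩ := exists_coherent_family (ι := Set.Iio σ)
    (N := fun α => M α →ₗ[R] E)
    (fun α s => p ∘ₗ s = D.map α σ α.2.le le_rfl)
    (fun α β h s s' => s' ∘ₗ D.map α β h.le β.2.le = s) fun θ t ht htcoh => by
      obtain ⟨x, hx, hxt⟩ := D.exists_lift_of_lt hperp hinj hi hp hr θ.2
        (s := fun α hα => t ⟨α, hα.trans θ.2⟩ hα)
        (D.isCompatible_of_lt fun α β hαβ hβ => htcoh ⟨α, _⟩ ⟨β, _⟩ hαβ hβ) fun α hα => ht _ _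
      exact ⟨x, hx, fun α => hxt α⟩
  exact ⟨fun α hα => S ⟨α, hα⟩, D.isCompatible_of_lt fun α β hαβ hβ => hScoh ⟨α, _⟩ ⟨β, hβ⟩ hαβ,
    fun α hα => hSlift ⟨α, hα⟩⟩

end ContinuousChain

/-- **generalized Eklof lemma.** Let `𝒞` be a class of modules, `σ` a limit
ordinal and `(M α, f β α | α ≤ β ≤ σ)` a continuous well-ordered direct system (continuity
is expressed by the universal property of the colimit at every limit ordinal `θ ≤ σ`) such
that `M α ∈ ⊥𝒞` and `f (α+1) α` is `𝒞`-injective for all `α < σ`. Then `M σ ∈ ⊥𝒞`. -/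
theorem ext1Zero_of_continuous_chain
    {R : Type} [Ring R] (𝒞 : Set (ModuleCat.{0} R)) (σ : Ordinal) (hσ : Order.IsSuccLimit σ)
    (M : Ordinal → Type) [∀ α, AddCommGroup (M α)] [∀ α, Module R (M α)]
    (f : ∀ α β, α ≤ β → β ≤ σ → (M α →ₗ[R] M β))
    (hid : ∀ (α) (h : α ≤ σ), f α α le_rfl h = LinearMap.id)
    (hcomp : ∀ (α β γ) (h1 : α ≤ β) (h2 : β ≤ γ) (h3 : γ ≤ σ),
      (f β γ h2 h3) ∘ₗ (f α β h1 (h2.trans h3)) = f α γ (h1.trans h2) h3)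
    (hcont : ∀ (θ : Ordinal) (hθσ : θ ≤ σ), Order.IsSuccLimit θ →
      ∀ (C : Type) [AddCommGroup C] [Module R C] (g : ∀ α, α < θ → (M α →ₗ[R] C)),
        (∀ (α β) (hαβ : α ≤ β) (hβ : β < θ),
          (g β hβ) ∘ₗ (f α β hαβ (hβ.le.trans hθσ)) = g α (lt_of_le_of_lt hαβ hβ)) →
        ∃! h : M θ →ₗ[R] C, ∀ (α) (hα : α < θ), h ∘ₗ (f α θ hα.le hθσ) = g α hα)
    (hperp : ∀ (α) (_ : α < σ), ∀ C ∈ 𝒞, Ext1Zero R (M α) ↥C)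
    (hinj : ∀ (α) (_ : α < σ) (h1 : α ≤ α + 1) (h2 : α + 1 ≤ σ), ∀ C ∈ 𝒞,
      ∀ g : M α →ₗ[R] ↥C, ∃ h : M (α + 1) →ₗ[R] ↥C, h ∘ₗ (f α (α + 1) h1 h2) = g) :
    ∀ C ∈ 𝒞, Ext1Zero R (M σ) ↥C := by
  intro C hC E _ _ i p hi hp hr
  let D : ContinuousChain R σ M := ⟨f, hid, hcomp, hcont⟩
  obtain ⟨s, hs, hlift⟩ := D.exists_compatible_lifts (fun α hα => hperp α hα C hC)
    (fun α hα h1 h2 => hinj α hα h1 h2 C hC) hi hp hr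
  obtain ⟨x, hx, -⟩ := D.exists_lift_of_isSuccLimit le_rfl hσ p id hs fun α hα => by
    rw [hlift, id_comp]
  exact ⟨x, hx⟩
end

section
/- Let 𝒞 be a class of right R-modules which is thick (closed under direct summands, extensions, kernels of epimorphisms and cokernels of monomorphisms within 𝒞) and closed under transfinite extensions (filtrations). Then 𝒞 is closed under direct limits of directed systems. -/
/-!
The direct limit of the `Gᵢ` is the cokernel of `K ↪ ⨁ᵢ Gᵢ`, where `K` is the kernel of the
canonical map, so it suffices that `𝒞` contains direct sums of members and `K`. A direct sum is
filtered by its partial sums over a well-ordering of the index set, with the summands as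
successive quotients. The kernel `K` is the directed union of the kernels `Kᵢ` of the
epimorphisms `⨁_{j ≤ i} Gⱼ → Gᵢ`, which are members.

A directed union of members is a member, by induction on the cardinality `κ` of the index set.
The union `⋃_{α < σ} Vα` of an increasing ordinal-indexed chain of members is a member, because
its filtration by the partial unions has successive quotients `Vα / ⋃_{β < α} Vβ`, cokernels of
monomorphisms between members by induction on `σ`. A countable directed family is cofinal with
an `ω`-chain; an uncountable one is the union of the chain of subfamilies closed under a choice
of upper bounds and generated by the initial segments of a well-ordering of type `κ.ord`, each
of which has cardinality `< κ`.
-/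

open LinearMap Submodule Cardinal
open scoped DirectSum

universe u

section BinaryClosure

open Set

variable {ι : Type*} (u : ι → ι → ι)

def binaryClosure (X : Set ι) : Set ι :=
  ⋃ n : ℕ, (fun Y => Y ∪ image2 u Y Y)^[n] X

variable {u}

theorem subset_binaryClosure (X : Set ι) : X ⊆ binaryClosure u X :=
  subset_iUnion (fun n => (fun Y => Y ∪ image2 u Y Y)^[n] X) 0

theorem binaryClosure_mono : Monotone (binaryClosure u) :=
  fun _ _ h => iUnion_mono fun n =>
    (Monotone.iterate (fun _ _ h => union_subset_union h (image2_subset h h)) n) h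

theorem map_mem_binaryClosure {X : Set ι} {a b : ι} (ha : a ∈ binaryClosure u X)
    (hb : b ∈ binaryClosure u X) : u a b ∈ binaryClosure u X := by
  have hstep : Monotone fun n => (fun Y => Y ∪ image2 u Y Y)^[n] X :=
    monotone_nat_of_le_succ fun n => by
      simp only [Function.iterate_succ_apply']
      exact subset_union_left
  obtain ⟨m, hm⟩ := mem_iUnion.1 ha
  obtain ⟨n, hn⟩ := mem_iUnion.1 hb
  refine mem_iUnion.2 ⟨max m n + 1, ?_⟩
  rw [Function.iterate_succ_apply']
  exact mem_union_right _ (mem_image2_of_mem (hstep (le_max_left m n) hm)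
    (hstep (le_max_right m n) hn))

theorem mk_binaryClosure_le (X : Set ι) : #(binaryClosure u X) ≤ max #X ℵ₀ := by
  have hℵ₀ : ℵ₀ ≤ max #X ℵ₀ := le_max_right _ _
  have hiter (n : ℕ) : #((fun Y => Y ∪ image2 u Y Y)^[n] X) ≤ max #X ℵ₀ := by
    induction n with
    | zero => exact le_max_left _ _
    | succ n ih =>
      rw [Function.iterate_succ_apply']
      set Y := (fun Y => Y ∪ image2 u Y Y)^[n] X
      calc #↥(Y ∪ image2 u Y Y) ≤ #Y + #Y * #Y :=
            (mk_union_le _ _).trans (add_le_add le_rfl mk_image2_le)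
        _ ≤ max #X ℵ₀ + max #X ℵ₀ * max #X ℵ₀ := by gcongr
        _ = max #X ℵ₀ := by rw [mul_eq_self hℵ₀, add_eq_self hℵ₀]
  have := mk_iUnion_le_lift (fun n => (fun Y => Y ∪ image2 u Y Y)^[n] X)
  simp only [lift_uzero, mk_eq_aleph0, lift_aleph0] at this
  exact this.trans ((mul_le_mul' hℵ₀ (ciSup_le' hiter)).trans (mul_eq_self hℵ₀).le)

end BinaryClosure

open Ordinal in
theorem exists_monotone_cover_by_small_closed {ι : Type u} (hι : ℵ₀ < #ι) (u : ι → ι → ι) :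
    ∃ S : Ordinal.{u} → Set ι, Monotone S ∧ (∀ α < (#ι).ord, #(S α) < #ι) ∧
      (∀ α, ∀ a ∈ S α, ∀ b ∈ S α, u a b ∈ S α) ∧ ∀ a, ∃ α < (#ι).ord, a ∈ S α := by
  obtain ⟨r, _, hr⟩ := exists_ord_eq ι
  refine ⟨fun α => binaryClosure u {a | typein r a < α},
    fun α β h => binaryClosure_mono fun _ ha => (show typein r _ < α from ha).trans_le h,
    fun α hα => ?_, fun α a ha b hb => map_mem_binaryClosure ha hb,
    fun a => ⟨typein r a + 1, ?_, subset_binaryClosure _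
      (show typein r a < _ from Order.lt_add_one_iff.2 le_rfl)⟩⟩
  · obtain ⟨x, rfl⟩ := typein_surj r (hr ▸ hα)
    have hIio : {a | typein r a < typein r x} = {a | r a x} := by
      ext; exact typein_lt_typein r
    refine (mk_binaryClosure_le _).trans_lt (max_lt ?_ hι)
    rw [hIio]
    exact card_typein (r := r) x ▸ card_typein_lt x hr
  · exact (isSuccLimit_ord hι.le).add_one_lt (hr ▸ typein_lt_type r a)

namespace DirectSum

variable {R : Type*} [Ring R] {ι : Type*} [DecidableEq ι] {A : ι → Type*}
  [∀ i, AddCommGroup (A i)] [∀ i, Module R (A i)]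

variable (R A) in
def supported (s : Set ι) : Submodule R (⨁ i, A i) :=
  ⨆ i ∈ s, range (lof R ι A i)

theorem supported_mono : Monotone (supported R A) :=
  fun _ _ h => biSup_mono fun _ hi => h hi

theorem lof_mem_supported {s : Set ι} {i : ι} (hi : i ∈ s) (x : A i) :
    lof R ι A i x ∈ supported R A s :=
  le_iSup₂ (f := fun i (_ : i ∈ s) => range (lof R ι A i)) i hi (mem_range_self _ x)

theorem supported_le_eqLocus {N : Type*} [AddCommGroup N] [Module R N]
    {F G : (⨁ i, A i) →ₗ[R] N} {s : Set ι} (h : ∀ i ∈ s, F ∘ₗ lof R ι A i = G ∘ₗ lof R ι A i) :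
    supported R A s ≤ eqLocus F G :=
  iSup₂_le fun i hi => by
    rintro _ ⟨x, rfl⟩
    exact LinearMap.congr_fun (h i hi) x

theorem supported_univ : supported R A Set.univ = ⊤ := by
  refine eq_top_iff'.2 fun x => ?_
  induction x using DirectSum.induction_on with
  | zero => exact zero_mem _
  | of i x => exact lof_mem_supported (Set.mem_univ i) x
  | add x y hx hy => exact add_mem hx hy

theorem supported_insert (i : ι) (s : Set ι) :
    supported R A (insert i s) = range (lof R ι A i) ⊔ supported R A s :=
  iSup_insert

theorem supported_iUnion {κ : Sort*} (s : κ → Set ι) :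
    supported R A (⋃ k, s k) = ⨆ k, supported R A (s k) :=
  iSup_iUnion _ _

theorem supported_sep_lt_of_isSuccLimit (s : Set ι) (ty : ι → Ordinal) {θ : Ordinal}
    (hθ : Order.IsSuccLimit θ) :
    supported R A {i | i ∈ s ∧ ty i < θ} = ⨆ α < θ, supported R A {i | i ∈ s ∧ ty i < α} := by
  have hU : {i | i ∈ s ∧ ty i < θ} = ⋃ α, ⋃ (_ : α < θ), {i | i ∈ s ∧ ty i < α} := by
    ext i
    simp only [Set.mem_ofPred_eq, Set.mem_iUnion, exists_prop]
    exact ⟨fun ⟨hs, h⟩ => ⟨ty i + 1, hθ.add_one_lt h, hs, Order.lt_add_one_iff.2 le_rfl⟩,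
      fun ⟨α, hα, hs, h⟩ => ⟨hs, h.trans hα⟩⟩
  simp only [hU, supported_iUnion]

theorem disjoint_range_lof_supported {s : Set ι} {i : ι} (hi : i ∉ s) :
    Disjoint (range (lof R ι A i)) (supported R A s) := by
  rw [disjoint_iff_inf_le]
  rintro _ ⟨⟨x, rfl⟩, hx⟩
  have h : component R ι A i (lof R ι A i x) = 0 :=
    supported_le_eqLocus (G := 0) (fun j hj => by
      ext y
      simp [component.of, ne_of_mem_of_not_mem hj hi]) hx
  simp only [component.lof_self] at h
  simp [h]

noncomputable def supQuotientSupportedEquiv {s : Set ι} {i : ι} (hi : i ∉ s) :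
    (↥(range (lof R ι A i) ⊔ supported R A s) ⧸
      comap (range (lof R ι A i) ⊔ supported R A s).subtype (supported R A s)) ≃ₗ[R] A i :=
  (quotientInfEquivSupQuotient _ _).symm ≪≫ₗ
    quotEquivOfEqBot _ (by
      rw [comap_subtype_self, top_inf_eq, ← disjoint_iff_comap_eq_bot]
      exact disjoint_range_lof_supported hi) ≪≫ₗ
    (LinearEquiv.ofInjective _ (of_injective i)).symm

theorem exists_mem_supported_Iic [Preorder ι] [IsDirectedOrder ι] [Nonempty ι]
    (x : ⨁ i, A i) : ∃ i, x ∈ supported R A (Set.Iic i) := by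
  induction x using DirectSum.induction_on with
  | zero => exact ⟨Classical.arbitrary ι, zero_mem _⟩
  | of i x => exact ⟨i, lof_eq_of R ι A i x ▸ lof_mem_supported (Set.mem_Iic.2 le_rfl) x⟩
  | add x y hx hy =>
    obtain ⟨i, hi⟩ := hx
    obtain ⟨j, hj⟩ := hy
    obtain ⟨k, hik, hjk⟩ := exists_ge_ge i j
    exact ⟨k, add_mem (supported_mono (Set.Iic_subset_Iic.2 hik) hi)
      (supported_mono (Set.Iic_subset_Iic.2 hjk) hj)⟩

end DirectSum

namespace Module.DirectLimit

open DirectSum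

variable {R : Type*} [Ring R] {ι : Type*} [Preorder ι] [DecidableEq ι] {G : ι → Type*}
  [∀ i, AddCommGroup (G i)] [∀ i, Module R (G i)] (f : ∀ i j, i ≤ j → G i →ₗ[R] G j)

open scoped Classical in
noncomputable def toStage (i : ι) : (⨁ j, G j) →ₗ[R] G i :=
  toModule R ι (G i) fun j => if h : j ≤ i then f j i h else 0

theorem toStage_comp_lof {i j : ι} (h : j ≤ i) : toStage f i ∘ₗ lof R ι G j = f j i h := by
  ext x
  simp [toStage, h]

noncomputable def stageKernel (i : ι) : Submodule R (⨁ j, G j) :=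
  supported R G (Set.Iic i) ⊓ ker (toStage f i)

theorem toModule_of_eq_of_mem_supported {i : ι} {x : ⨁ j, G j}
    (hx : x ∈ supported R G (Set.Iic i)) :
    toModule R ι (DirectLimit G f) (of R ι G f) x = of R ι G f i (toStage f i x) :=
  supported_le_eqLocus (G := of R ι G f i ∘ₗ toStage f i) (fun j hj => by
    rw [comp_assoc, toStage_comp_lof f hj]
    ext x
    simpa using (of_f (R := R) (f := f) (hij := hj) (x := x)).symm) hx

theorem toModule_of_surjective [IsDirectedOrder ι] [Nonempty ι] :
    Function.Surjective (toModule R ι (DirectLimit G f) (of R ι G f)) := fun z =>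
  Module.DirectLimit.induction_on z fun i x => ⟨lof R ι G i x, toModule_lof R i x⟩

variable [DirectedSystem G fun i j h => f i j h]

theorem toStage_comp_subtype_surjective (i : ι) :
    Function.Surjective (toStage f i ∘ₗ (supported R G (Set.Iic i)).subtype) := fun x =>
  ⟨⟨lof R ι G i x, lof_mem_supported (Set.mem_Iic.2 le_rfl) x⟩, by
    simp [← LinearMap.comp_apply (toStage f i), toStage_comp_lof f le_rfl,
      DirectedSystem.map_self']⟩

theorem toStage_eq_of_mem_supported {i k : ι} (hik : i ≤ k) {x : ⨁ j, G j}
    (hx : x ∈ supported R G (Set.Iic i)) : toStage f k x = f i k hik (toStage f i x) :=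
  supported_le_eqLocus (F := toStage f k) (G := f i k hik ∘ₗ toStage f i) (fun j hj => by
    rw [comp_assoc, toStage_comp_lof f hj, toStage_comp_lof f (le_trans hj hik)]
    ext
    exact (DirectedSystem.map_map' f hj hik _).symm) hx

theorem stageKernel_mono : Monotone (stageKernel f) := fun i k hik x ⟨hx, hx₀⟩ =>
  ⟨supported_mono (Set.Iic_subset_Iic.2 hik) hx, by
    rw [SetLike.mem_coe, mem_ker, toStage_eq_of_mem_supported f hik hx, mem_ker.1 hx₀, map_zero]⟩

variable [IsDirectedOrder ι] [Nonempty ι]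

theorem ker_toModule_of :
    ker (toModule R ι (DirectLimit G f) (of R ι G f)) = ⨆ i, stageKernel f i := by
  refine le_antisymm (fun x hx => ?_) (iSup_le fun i x hx => ?_)
  · obtain ⟨i, hi⟩ := exists_mem_supported_Iic (R := R) x
    rw [mem_ker, toModule_of_eq_of_mem_supported f hi] at hx
    obtain ⟨j, hij, hj⟩ := of.zero_exact hx
    refine mem_iSup_of_mem j ⟨supported_mono (Set.Iic_subset_Iic.2 hij) hi, ?_⟩
    rw [SetLike.mem_coe, mem_ker, toStage_eq_of_mem_supported f hij hi, hj]
  · rw [mem_ker, toModule_of_eq_of_mem_supported f hx.1, mem_ker.1 hx.2, map_zero]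

end Module.DirectLimit

section ClosureProperties

variable {R : Type*} [Ring R]

def IsClosedUnderSummands (𝒞 : Set (ModuleCat.{0} R)) : Prop :=
  ∀ M ∈ 𝒞, ∀ (N : Type) [AddCommGroup N] [Module R N] (i : N →ₗ[R] M) (r : M →ₗ[R] N),
    r ∘ₗ i = LinearMap.id → ModuleCat.of R N ∈ 𝒞

def IsClosedUnderKernelsOfEpis (𝒞 : Set (ModuleCat.{0} R)) : Prop :=
  ∀ (A B : ModuleCat.{0} R), A ∈ 𝒞 → B ∈ 𝒞 → ∀ f : A →ₗ[R] B, Function.Surjective f →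
    ModuleCat.of R (ker f) ∈ 𝒞

def IsClosedUnderCokernelsOfMonos (𝒞 : Set (ModuleCat.{0} R)) : Prop :=
  ∀ (A B : ModuleCat.{0} R), A ∈ 𝒞 → B ∈ 𝒞 → ∀ f : A →ₗ[R] B, Function.Injective f →
    ModuleCat.of R (B ⧸ range f) ∈ 𝒞

def IsClosedUnderFiltrations (𝒞 : Set (ModuleCat.{0} R)) : Prop :=
  ∀ (M : Type) [AddCommGroup M] [Module R M] (σ : Ordinal.{u}) (F : Ordinal.{u} → Submodule R M),
    (∀ α β, α ≤ β → F α ≤ F β) → F 0 = ⊥ → F σ = ⊤ →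
    (∀ θ, θ ≤ σ → Order.IsSuccLimit θ → F θ = ⨆ (α : Ordinal) (_ : α < θ), F α) →
    (∀ α, α < σ → ModuleCat.of R (F (α + 1) ⧸ comap (F (α + 1)).subtype (F α)) ∈ 𝒞) →
    ModuleCat.of R M ∈ 𝒞

variable {𝒞 : Set (ModuleCat.{0} R)} {M N : Type} [AddCommGroup M] [Module R M]
  [AddCommGroup N] [Module R N]

theorem IsClosedUnderSummands.of_linearEquiv (hsum : IsClosedUnderSummands 𝒞)
    (hM : ModuleCat.of R M ∈ 𝒞) (e : M ≃ₗ[R] N) : ModuleCat.of R N ∈ 𝒞 :=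
  hsum _ hM N e.symm.toLinearMap e.toLinearMap (by ext; simp)

theorem IsClosedUnderFiltrations.of_subsingleton (hfil : IsClosedUnderFiltrations.{u} 𝒞)
    [Subsingleton M] : ModuleCat.of R M ∈ 𝒞 :=
  hfil M 0 (fun _ => ⊥) (fun _ _ _ => le_rfl) rfl (Subsingleton.elim _ _)
    (fun _ _ _ => by simp) (fun _ h => (not_lt_zero h).elim)

theorem IsClosedUnderCokernelsOfMonos.quotient_mem (hcok : IsClosedUnderCokernelsOfMonos 𝒞)
    {p q : Submodule R M} (hpq : p ≤ q) (hp : ModuleCat.of R p ∈ 𝒞)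
    (hq : ModuleCat.of R q ∈ 𝒞) : ModuleCat.of R (q ⧸ comap q.subtype p) ∈ 𝒞 := by
  have h := hcok (.of R p) (.of R q) hp hq (inclusion hpq) (inclusion_injective hpq)
  rwa [range_inclusion] at h

theorem IsClosedUnderFiltrations.submodule_mem_of_filtration (hfil : IsClosedUnderFiltrations.{u} 𝒞)
    (hsum : IsClosedUnderSummands 𝒞) (W : Ordinal.{u} → Submodule R M) (σ : Ordinal.{u})
    (hmono : Monotone W) (h0 : W 0 = ⊥)
    (hcont : ∀ θ ≤ σ, Order.IsSuccLimit θ → W θ = ⨆ α < θ, W α)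
    (hquot : ∀ α < σ, ModuleCat.of R (W (α + 1) ⧸ comap (W (α + 1)).subtype (W α)) ∈ 𝒞) :
    ModuleCat.of R (W σ) ∈ 𝒞 := by
  set T := W σ
  have hmap {α : Ordinal} (hα : α ≤ σ) : map T.subtype (comap T.subtype (W α)) = W α := by
    rw [map_comap_subtype, inf_eq_right.2 (hmono hα)]
  refine hfil T σ (fun α => comap T.subtype (W α)) (fun α β h => comap_mono (hmono h))
    (by simp [h0]) (comap_subtype_self T) (fun θ hθ hlim => ?_) (fun α hα => ?_)
  · apply map_injective_of_injective T.injective_subtype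
    simp only [Submodule.map_iSup]
    rw [hmap hθ, biSup_congr fun α hα => hmap ((le_of_lt hα).trans hθ), hcont θ hθ hlim]
  · have hα1 : α + 1 ≤ σ := Order.add_one_le_of_lt hα
    refine hsum.of_linearEquiv (hquot α hα)
      (Quotient.equiv _ _ (comapSubtypeEquivOfLe (hmono hα1)).symm ?_)
    ext x
    simp

theorem biSup_lt_mem (hsum : IsClosedUnderSummands 𝒞) (hcok : IsClosedUnderCokernelsOfMonos 𝒞)
    (hfil : IsClosedUnderFiltrations.{u} 𝒞) (V : Ordinal.{u} → Submodule R M) (hV : Monotone V)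
    (σ : Ordinal.{u}) (hmem : ∀ α < σ, ModuleCat.of R (V α) ∈ 𝒞) :
    ModuleCat.of R ↥(⨆ α < σ, V α) ∈ 𝒞 := by
  induction σ using WellFoundedLT.induction with | _ σ ih =>
  set W : Ordinal.{u} → Submodule R M := fun θ => ⨆ α < θ, V α
  have hW : Monotone W := fun _ _ h => biSup_mono fun _ h' => h'.trans_le h
  have hW_succ (α : Ordinal.{u}) : W (α + 1) = V α :=
    le_antisymm (iSup₂_le fun _ hβ => hV (Order.lt_add_one_iff.1 hβ))
      (le_iSup₂ (f := fun β _ => V β) α (Order.lt_add_one_iff.2 le_rfl))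
  refine hfil.submodule_mem_of_filtration hsum W σ hW (by simp [W]) (fun θ _ hθ => ?_)
    (fun α hα => ?_)
  · refine le_antisymm (iSup₂_le fun α hα => ?_) (iSup₂_le fun α hα => hW hα.le)
    rw [← hW_succ]
    exact le_iSup₂ (f := fun β _ => W β) (α + 1) (hθ.add_one_lt hα)
  · rw [hW_succ]
    exact hcok.quotient_mem (hW_succ α ▸ hW (le_add_right le_rfl))
      (ih α hα fun β hβ => hmem β (hβ.trans hα)) (hmem α hα)

theorem iSup_nat_mem (hsum : IsClosedUnderSummands 𝒞) (hcok : IsClosedUnderCokernelsOfMonos 𝒞)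
    (hfil : IsClosedUnderFiltrations.{u} 𝒞) (U : ℕ → Submodule R M) (hU : Monotone U)
    (hmem : ∀ n, ModuleCat.of R (U n) ∈ 𝒞) : ModuleCat.of R ↥(⨆ n, U n) ∈ 𝒞 := by
  set V : Ordinal.{u} → Submodule R M := fun α => ⨆ (n : ℕ) (_ : (n : Ordinal) ≤ α), U n
  have hV_nat (n : ℕ) : V n = U n :=
    le_antisymm (iSup₂_le fun _ hm => hU (by exact_mod_cast hm))
      (le_iSup₂ (f := fun (m : ℕ) (_ : (m : Ordinal.{u}) ≤ n) => U m) n le_rfl)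
  have hUV : ⨆ n, U n = ⨆ α < Ordinal.omega0, V α :=
    le_antisymm
      (iSup_le fun n => (hV_nat n).ge.trans
        (le_iSup₂ (f := fun α _ => V α) (n : Ordinal) (Ordinal.natCast_lt_omega0 n)))
      (iSup₂_le fun _ _ => iSup₂_le fun n _ => le_iSup U n)
  rw [hUV]
  refine biSup_lt_mem hsum hcok hfil V (fun _ _ h => biSup_mono fun _ h' => h'.trans h) _
    fun α hα => ?_
  obtain ⟨n, rfl⟩ := Ordinal.lt_omega0.1 hα
  rw [hV_nat]
  exact hmem n

theorem iSup_mem_of_directed (hsum : IsClosedUnderSummands 𝒞)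
    (hcok : IsClosedUnderCokernelsOfMonos 𝒞) (hfil : IsClosedUnderFiltrations.{u} 𝒞)
    {ι : Type u} (V : ι → Submodule R M) (hV : Directed (· ≤ ·) V)
    (hmem : ∀ i, ModuleCat.of R (V i) ∈ 𝒞) : ModuleCat.of R ↥(⨆ i, V i) ∈ 𝒞 := by
  induction hκ : #ι using WellFoundedLT.induction generalizing ι with | _ κ ih =>
  rcases isEmpty_or_nonempty ι with hι | hι
  · rw [iSup_of_empty]
    exact hfil.of_subsingleton
  rcases le_or_gt #ι ℵ₀ with hc | hc
  · have : Countable ι := mk_le_aleph0_iff.1 hc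
    have := Encodable.ofCountable ι
    inhabit ι
    have hseq : ⨆ i, V i = ⨆ n, V (hV.sequence V n) :=
      le_antisymm (iSup_le fun i => (hV.le_sequence i).trans (le_iSup_of_le _ le_rfl))
        (iSup_le fun n => le_iSup V _)
    rw [hseq]
    exact iSup_nat_mem hsum hcok hfil _ hV.sequence_mono fun n => hmem _
  choose u hu₁ hu₂ using hV
  obtain ⟨S, hS, hS_card, hS_closed, hS_cover⟩ := exists_monotone_cover_by_small_closed hc u
  have hVS : ⨆ i, V i = ⨆ α < (#ι).ord, ⨆ i ∈ S α, V i := by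
    refine le_antisymm (iSup_le fun i => ?_) (iSup₂_le fun _ _ => iSup₂_le fun i _ => le_iSup V i)
    obtain ⟨α, hα, hi⟩ := hS_cover i
    exact le_iSup₂_of_le α hα (le_iSup₂ (f := fun i _ => V i) i hi)
  rw [hVS]
  refine biSup_lt_mem hsum hcok hfil (fun α => ⨆ i ∈ S α, V i)
    (fun α β h => biSup_mono fun i (hi : i ∈ S α) => hS h hi) _ fun α hα => ?_
  rw [iSup_subtype']
  exact ih _ (hκ ▸ hS_card α hα) (fun i : S α => V i)
    (fun a b => ⟨⟨u a b, hS_closed α a a.2 b b.2⟩, hu₁ a b, hu₂ a b⟩) (fun i => hmem i) rfl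

theorem supported_mem (hsum : IsClosedUnderSummands 𝒞) (hfil : IsClosedUnderFiltrations.{u} 𝒞)
    {X : Type} [DecidableEq X] (A : X → Type) [∀ x, AddCommGroup (A x)] [∀ x, Module R (A x)]
    (hA : ∀ x, ModuleCat.of R (A x) ∈ 𝒞) (s : Set X) :
    ModuleCat.of R (DirectSum.supported R A s) ∈ 𝒞 := by
  obtain ⟨r, _, -⟩ := exists_ord_eq (ULift.{u} X)
  let ty : X → Ordinal.{u} := fun x => Ordinal.typein r (ULift.up x)
  have hty : Function.Injective ty := fun x y h =>
    ULift.up_injective (Ordinal.typein_injective r h)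
  let W : Ordinal.{u} → Submodule R (⨁ x, A x) :=
    fun α => DirectSum.supported R A {x | x ∈ s ∧ ty x < α}
  have hW_type : W (Ordinal.type r) = DirectSum.supported R A s :=
    congrArg (DirectSum.supported R A) (Set.ext fun x =>
      and_iff_left (Ordinal.typein_lt_type r (ULift.up x)))
  rw [← hW_type]
  refine hfil.submodule_mem_of_filtration hsum W _
    (fun α β h => DirectSum.supported_mono fun x hx => ⟨hx.1, hx.2.trans_le h⟩) ?_
    (fun θ _ hθ => DirectSum.supported_sep_lt_of_isSuccLimit s ty hθ) (fun α _ => ?_)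
  · simp [W, DirectSum.supported]
  by_cases hα : ∃ x ∈ s, ty x = α
  · obtain ⟨x, hx, rfl⟩ := hα
    have hW_succ : W (ty x + 1) = range (DirectSum.lof R X A x) ⊔ W (ty x) := by
      rw [← DirectSum.supported_insert]
      refine congrArg (DirectSum.supported R A) (Set.ext fun y => ?_)
      simp only [Set.mem_ofPred_eq, Set.mem_insert_iff, Order.lt_add_one_iff, le_iff_lt_or_eq,
        hty.eq_iff]
      aesop
    rw [hW_succ]
    exact hsum.of_linearEquiv (hA x)
      (DirectSum.supQuotientSupportedEquiv fun h => lt_irrefl _ h.2).symm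
  · have hW_succ : W (α + 1) = W α := by
      refine congrArg (DirectSum.supported R A) (Set.ext fun y => and_congr_right fun hy => ?_)
      rw [Order.lt_add_one_iff, le_iff_lt_or_eq, or_iff_left fun h => hα ⟨y, hy, h⟩]
    rw [hW_succ, comap_subtype_self]
    exact hfil.of_subsingleton

theorem stageKernel_mem (hsum : IsClosedUnderSummands 𝒞) (hker : IsClosedUnderKernelsOfEpis 𝒞)
    (hfil : IsClosedUnderFiltrations.{u} 𝒞) {ι : Type} [Preorder ι] [DecidableEq ι]
    {G : ι → Type} [∀ i, AddCommGroup (G i)] [∀ i, Module R (G i)]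
    (f : ∀ i j, i ≤ j → G i →ₗ[R] G j) [DirectedSystem G fun i j h => f i j h]
    (hG : ∀ i, ModuleCat.of R (G i) ∈ 𝒞) (i : ι) :
    ModuleCat.of R (Module.DirectLimit.stageKernel f i) ∈ 𝒞 := by
  have h := hker _ _ (supported_mem hsum hfil G hG _) (hG i) _
    (Module.DirectLimit.toStage_comp_subtype_surjective f i)
  refine hsum.of_linearEquiv h ((equivMapOfInjective _ (injective_subtype _) _).trans
    (LinearEquiv.ofEq _ _ ?_))
  rw [ker_comp, map_comap_subtype]
  rfl

end ClosureProperties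

theorem thick_filtrationClosed_closed_under_directLimits_general
    {R : Type} [Ring R] (𝒞 : Set (ModuleCat.{0} R))
    -- closed under direct summands (hence under isomorphisms)
    (hsum : ∀ (M : ModuleCat.{0} R), M ∈ 𝒞 → ∀ (N : Type) [AddCommGroup N] [Module R N]
      (i : N →ₗ[R] ↥M) (r : ↥M →ₗ[R] N), r ∘ₗ i = LinearMap.id →
      ModuleCat.of R N ∈ 𝒞)
    -- closed under kernels of epimorphisms between members
    (hker : ∀ (A B : ModuleCat.{0} R), A ∈ 𝒞 → B ∈ 𝒞 → ∀ (f : ↥A →ₗ[R] ↥B),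
      Function.Surjective f → ModuleCat.of R ↥(LinearMap.ker f) ∈ 𝒞)
    -- closed under cokernels of monomorphisms between members
    (hcok : ∀ (A B : ModuleCat.{0} R), A ∈ 𝒞 → B ∈ 𝒞 → ∀ (f : ↥A →ₗ[R] ↥B),
      Function.Injective f → ModuleCat.of R (↥B ⧸ LinearMap.range f) ∈ 𝒞)
    -- closed under filtrations
    (hfil : ∀ (M : Type) [AddCommGroup M] [Module R M] (σ : Ordinal)
      (F : Ordinal → Submodule R M),
      (∀ α β, α ≤ β → F α ≤ F β) → F 0 = ⊥ → F σ = ⊤ →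
      (∀ θ, θ ≤ σ → Order.IsSuccLimit θ → F θ = ⨆ (α : Ordinal) (_ : α < θ), F α) →
      (∀ α, α < σ →
        ModuleCat.of R (↥(F (α + 1)) ⧸ Submodule.comap (F (α + 1)).subtype (F α)) ∈ 𝒞) →
      ModuleCat.of R M ∈ 𝒞) :
    -- conclusion: closed under direct limits
    ∀ (ι : Type) [Preorder ι] [IsDirected ι (· ≤ ·)] [DecidableEq ι] [Nonempty ι]
      (G : ι → ModuleCat.{0} R) (f : ∀ i j, i ≤ j → (↥(G i) →ₗ[R] ↥(G j))),
      DirectedSystem (fun i => ↥(G i)) (fun i j h => f i j h) →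
      (∀ i, G i ∈ 𝒞) →
      ModuleCat.of R (Module.DirectLimit (fun i => ↥(G i)) f) ∈ 𝒞 := by
  intro ι _ _ _ _ G f _ hG
  set π := DirectSum.toModule R ι _ (Module.DirectLimit.of R ι (fun i => G i) f)
  have hsum_mem : ModuleCat.of R (⨁ i, G i) ∈ 𝒞 :=
    IsClosedUnderSummands.of_linearEquiv hsum (supported_mem hsum hfil _ hG Set.univ)
      (LinearEquiv.ofTop _ DirectSum.supported_univ)
  have hker_mem : ModuleCat.of R (ker π) ∈ 𝒞 := by
    have h := iSup_mem_of_directed hsum hcok hfil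
      (fun i : ULift ι => Module.DirectLimit.stageKernel f i.down) (fun a b => ?_)
      fun i => stageKernel_mem hsum hker hfil f hG i.down
    · rwa [iSup_ulift, ← Module.DirectLimit.ker_toModule_of] at h
    obtain ⟨k, hak, hbk⟩ := exists_ge_ge a.down b.down
    exact ⟨⟨k⟩, Module.DirectLimit.stageKernel_mono f hak,
      Module.DirectLimit.stageKernel_mono f hbk⟩
  exact IsClosedUnderSummands.of_linearEquiv hsum
    (hcok _ _ hker_mem hsum_mem _ (ker π).injective_subtype)
    ((quotEquivOfEq _ _ (range_subtype _)).trans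
      (π.quotKerEquivOfSurjective (Module.DirectLimit.toModule_of_surjective f)))

/-- A class `𝒞` of `R`-modules which is thick (closed under direct
summands, extensions, kernels of epimorphisms and cokernels of monomorphisms within `𝒞`)
and closed under transfinite extensions (filtrations) is closed under direct limits of
directed systems. -/
theorem thick_filtrationClosed_closed_under_directLimits
    {R : Type} [Ring R] (𝒞 : Set (ModuleCat.{0} R))
    -- closed under direct summands (hence under isomorphisms)
    (hsum : ∀ (M : ModuleCat.{0} R), M ∈ 𝒞 → ∀ (N : Type) [AddCommGroup N] [Module R N]
      (i : N →ₗ[R] ↥M) (r : ↥M →ₗ[R] N), r ∘ₗ i = LinearMap.id →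
      ModuleCat.of R N ∈ 𝒞)
    -- closed under extensions
    (hext : ∀ (A C : ModuleCat.{0} R), A ∈ 𝒞 → C ∈ 𝒞 →
      ∀ (B : Type) [AddCommGroup B] [Module R B] (f : ↥A →ₗ[R] B) (g : B →ₗ[R] ↥C),
        Function.Injective f → Function.Surjective g →
        LinearMap.range f = LinearMap.ker g → ModuleCat.of R B ∈ 𝒞)
    -- closed under kernels of epimorphisms between members
    (hker : ∀ (A B : ModuleCat.{0} R), A ∈ 𝒞 → B ∈ 𝒞 → ∀ (f : ↥A →ₗ[R] ↥B),
      Function.Surjective f → ModuleCat.of R ↥(LinearMap.ker f) ∈ 𝒞)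
    -- closed under cokernels of monomorphisms between members
    (hcok : ∀ (A B : ModuleCat.{0} R), A ∈ 𝒞 → B ∈ 𝒞 → ∀ (f : ↥A →ₗ[R] ↥B),
      Function.Injective f → ModuleCat.of R (↥B ⧸ LinearMap.range f) ∈ 𝒞)
    -- closed under filtrations
    (hfil : ∀ (M : Type) [AddCommGroup M] [Module R M] (σ : Ordinal)
      (F : Ordinal → Submodule R M),
      (∀ α β, α ≤ β → F α ≤ F β) → F 0 = ⊥ → F σ = ⊤ →
      (∀ θ, θ ≤ σ → Order.IsSuccLimit θ → F θ = ⨆ (α : Ordinal) (_ : α < θ), F α) →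
      (∀ α, α < σ →
        ModuleCat.of R (↥(F (α + 1)) ⧸ Submodule.comap (F (α + 1)).subtype (F α)) ∈ 𝒞) →
      ModuleCat.of R M ∈ 𝒞) :
    -- conclusion: closed under direct limits
    ∀ (ι : Type) [Preorder ι] [IsDirected ι (· ≤ ·)] [DecidableEq ι] [Nonempty ι]
      (G : ι → ModuleCat.{0} R) (f : ∀ i j, i ≤ j → (↥(G i) →ₗ[R] ↥(G j))),
      DirectedSystem (fun i => ↥(G i)) (fun i j h => f i j h) →
      (∀ i, G i ∈ 𝒞) →
      ModuleCat.of R (Module.DirectLimit (fun i => ↥(G i)) f) ∈ 𝒞 :=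
  thick_filtrationClosed_closed_under_directLimits_general 𝒞 hsum hker hcok hfil
end
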